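/- Let α : Fin n → ℝ with all entries nonzero and sorted by absolute value (|α i| ≤ |α j| for i ≤ j). For sign vectors η : Fin n → {-1,1}, define PM(η) = ∑_j ln(1 + e^{-η j · α j}). If η disagrees with sgn(α) at index w and agrees at index v, where |α v| < |α w|, then swapping (agreeing at w and disagreeing at v instead) strictly decreases PM. -/
import Mathlib


/-- Exact LLR-based SCL path metric of a Rate-1 node. -/
noncomputable def PM {n : ℕ} (α η : Fin n → ℝ) : ℝ :=
  ∑ j, Real.log (1 + Real.exp (-(η j * α j)))

lemma sign_mul_self' (x : ℝ) (hx : x ≠ 0) : Real.sign x * x = |x| := by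
  rcases hx.lt_or_gt with h | h
  · rw [Real.sign_of_neg h, abs_of_neg h]; ring
  · rw [Real.sign_of_pos h, abs_of_pos h]; ring

lemma neg_sign_mul_self (x ξ : ℝ) (hx : x ≠ 0) (hξ : ξ = 1 ∨ ξ = -1)
    (hne : ξ ≠ Real.sign x) : ξ * x = -|x| := by
  rcases hx.lt_or_gt with h | h
  · rw [Real.sign_of_neg h] at hne
    rcases hξ with rfl | rfl
    · rw [abs_of_neg h]; ring
    · exact absurd rfl hne
  · rw [Real.sign_of_pos h] at hne
    rcases hξ with rfl | rfl
    · exact absurd rfl hne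
    · rw [abs_of_pos h]; ring

lemma logdiff (a : ℝ) :
    Real.log (1 + Real.exp a) - Real.log (1 + Real.exp (-a)) = a := by
  have h1 : (1 : ℝ) + Real.exp a = Real.exp a * (1 + Real.exp (-a)) := by
    rw [mul_add, mul_one, ← Real.exp_add]
    simp [add_comm]
  have hpos : (0 : ℝ) < 1 + Real.exp (-a) := by positivity
  rw [h1, Real.log_mul (Real.exp_ne_zero a) (ne_of_gt hpos), Real.log_exp]
  ring

theorem stmt_7 {n : ℕ} (α : Fin n → ℝ) (hnz : ∀ j, α j ≠ 0)
    (hsort : ∀ i j : Fin n, i ≤ j → |α i| ≤ |α j|)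
    (v w : Fin n) (hvw : |α v| < |α w|)
    (η η' : Fin n → ℝ)
    (hη : ∀ j, η j = 1 ∨ η j = -1) (hη' : ∀ j, η' j = 1 ∨ η' j = -1)
    (h1 : η v = Real.sign (α v)) (h2 : η w ≠ Real.sign (α w))
    (h3 : η' v ≠ Real.sign (α v)) (h4 : η' w = Real.sign (α w))
    (h5 : ∀ j, j ≠ v → j ≠ w → η' j = η j) :
    PM α η' < PM α η := by
  have hvne : v ≠ w := by
    intro h; rw [h] at hvw; exact lt_irrefl _ hvw
  set f : (Fin n → ℝ) → Fin n → ℝ :=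
    fun ξ j => Real.log (1 + Real.exp (-(ξ j * α j))) with hf
  have hv : η v * α v = |α v| := by rw [h1]; exact sign_mul_self' _ (hnz v)
  have hw : η w * α w = -|α w| := neg_sign_mul_self _ _ (hnz w) (hη w) h2
  have hv' : η' v * α v = -|α v| := neg_sign_mul_self _ _ (hnz v) (hη' v) h3
  have hw' : η' w * α w = |α w| := by rw [h4]; exact sign_mul_self' _ (hnz w)
  have key : PM α η' - PM α η =
      (f η' v - f η v) + (f η' w - f η w) := by
    have : PM α η' - PM α η = ∑ j, (f η' j - f η j) := by
      rw [Finset.sum_sub_distrib]; rfl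
    rw [this]
    refine Finset.sum_eq_add v w hvne ?_ (fun h => absurd (Finset.mem_univ v) h)
      (fun h => absurd (Finset.mem_univ w) h)
    intro c _ ⟨hcv, hcw⟩
    simp [hf, h5 c hcv hcw]
  have hval : PM α η' - PM α η = |α v| - |α w| := by
    rw [key]
    have e1 : f η' v - f η v = |α v| := by
      simp only [hf, hv, hv', neg_neg]
      exact logdiff _
    have e2 : f η' w - f η w = -|α w| := by
      simp only [hf, hw, hw', neg_neg]
      have := logdiff (-|α w|)
      rw [neg_neg] at this
      linarith
    rw [e1, e2]; ring
  have : PM α η' - PM α η < 0 := by rw [hval]; linarith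
  linarith
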